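/- arXiv:1904.04753 — 2 statements merged into one kernel-verified Lean document; each statement's English description precedes it below -/
import Mathlib

section
/- MAIS(G*) = 7: the maximum cardinality of a subset S of {1,…,12} such that the subgraph of G* induced by S contains no directed cycle equals 7. -/
/-- The want sets `W₁, W₂, W₃` of the three receivers. -/
def Wset : Fin 3 → Finset ℕ
  | 0 => {1, 2, 3, 4}
  | 1 => {5, 6, 7, 8}
  | 2 => {9, 10, 11, 12}

/-- The side information sets `K₁, K₂, K₃` of the three receivers. -/
def Kset : Fin 3 → Finset ℕ
  | 0 => {5, 6, 9, 10}
  | 1 => {1, 2, 9, 11}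
  | 2 => {1, 3, 5, 7}

/-- Directed edge relation of the side information graph `G*` on `{1, …, 12}`:
`(a, b)` is an edge iff `a ∈ Wᵢ` and `b ∈ Kᵢ` for the (unique) `i` with `a ∈ Wᵢ`. -/
def Gedge (a b : ℕ) : Prop := ∃ i : Fin 3, a ∈ Wset i ∧ b ∈ Kset i

/-- The underlying undirected side information graph `G*ᵤ`: distinct `a, b` are adjacent iff
both `(a, b)` and `(b, a)` are directed edges of `G*`. -/
def Gu : SimpleGraph ℕ where
  Adj a b := a ≠ b ∧ Gedge a b ∧ Gedge b a
  symm := by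
    constructor
    intro a b h
    exact ⟨h.1.symm, h.2.2, h.2.1⟩
  loopless := by
    constructor
    intro a h
    exact h.1 rfl

/-- A directed cycle (of length `k + 2 ≥ 2`) with all its vertices in the finite set `S`,
in the directed graph with edge relation `E`: a sequence of distinct vertices
`v 0, v 1, …` with a directed edge from each vertex to the (cyclically) next one. -/
def HasDirCycleIn (E : ℕ → ℕ → Prop) (S : Finset ℕ) : Prop :=
  ∃ k : ℕ, ∃ v : Fin (k + 2) → ℕ,
    Function.Injective v ∧ (∀ i, v i ∈ S) ∧ ∀ i, E (v i) (v (i + 1))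

/-- `MAIS` of the subgraph induced by `S` of the directed graph with edge relation `E`:
the maximum cardinality of a subset `T ⊆ S` whose induced subgraph contains no directed
cycle. -/
noncomputable def maisOn (E : ℕ → ℕ → Prop) (S : Finset ℕ) : ℕ :=
  sSup {n : ℕ | ∃ T : Finset ℕ, T ⊆ S ∧ T.card = n ∧ ¬ HasDirCycleIn E T}

/-- The independence number of the subgraph of `G` induced by the finite vertex set `S`:
the maximum cardinality of a set `T ⊆ S` of pairwise non-adjacent vertices. -/
noncomputable def alphaOn (G : SimpleGraph ℕ) (S : Finset ℕ) : ℕ :=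
  sSup {n : ℕ | ∃ T : Finset ℕ, T ⊆ S ∧ T.card = n ∧ ∀ a ∈ T, ∀ b ∈ T, ¬ G.Adj a b}

/-!
Any five of the nine vertices `N = {1, 2, 3, 5, 6, 7, 9, 10, 11}` that have an incoming edge
contain a directed cycle of length 2 or 3 (a finite check). So an acyclic set has at most four
vertices in `N`, and at most the three remaining vertices `4, 8, 12` outside it. Conversely
`{2, 4, 8, 9, 10, 11, 12}` is acyclic, since the potential `8 ↦ 0`, `9, 10, 11 ↦ 2`, all else `↦ 1`
strictly increases along each of its edges.
-/

section DirectedCycles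

variable {E : ℕ → ℕ → Prop}

theorem HasDirCycleIn.mono {S T : Finset ℕ} (hST : S ⊆ T) (h : HasDirCycleIn E S) :
    HasDirCycleIn E T :=
  let ⟨k, v, hinj, hmem, hedge⟩ := h
  ⟨k, v, hinj, fun i => hST (hmem i), hedge⟩

theorem hasDirCycleIn_of_two_cycle {S : Finset ℕ} {a b : ℕ} (ha : a ∈ S) (hb : b ∈ S)
    (hab : a ≠ b) (hE₁ : E a b) (hE₂ : E b a) : HasDirCycleIn E S := by
  refine ⟨0, ![a, b], ?_, ?_, ?_⟩
  · intro i j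
    fin_cases i <;> fin_cases j <;> simp_all [eq_comm]
  all_goals intro i; fin_cases i <;> assumption

theorem hasDirCycleIn_of_three_cycle {S : Finset ℕ} {a b c : ℕ} (ha : a ∈ S) (hb : b ∈ S)
    (hc : c ∈ S) (hab : a ≠ b) (hbc : b ≠ c) (hac : a ≠ c) (hE₁ : E a b) (hE₂ : E b c)
    (hE₃ : E c a) : HasDirCycleIn E S := by
  refine ⟨1, ![a, b, c], ?_, ?_, ?_⟩
  · intro i j
    fin_cases i <;> fin_cases j <;> simp_all [eq_comm]
  all_goals intro i; fin_cases i <;> assumption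

/-- A directed cycle cannot climb forever: its vertex of maximal potential has a successor. -/
theorem not_hasDirCycleIn_of_potential {α : Type*} [LinearOrder α] {T : Finset ℕ} (f : ℕ → α)
    (hf : ∀ a ∈ T, ∀ b ∈ T, E a b → f a < f b) : ¬ HasDirCycleIn E T := by
  rintro ⟨k, v, -, hmem, hedge⟩
  obtain ⟨j, -, hj⟩ := Finset.exists_max_image Finset.univ (f ∘ v) Finset.univ_nonempty
  exact (hf _ (hmem j) _ (hmem (j + 1)) (hedge j)).not_ge (hj _ (Finset.mem_univ _))

theorem card_inter_le_of_not_hasDirCycleIn {A T : Finset ℕ} {m : ℕ}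
    (hA : ∀ B ⊆ A, B.card = m + 1 → HasDirCycleIn E B) (hT : ¬ HasDirCycleIn E T) :
    (T ∩ A).card ≤ m := by
  by_contra! hlt
  obtain ⟨B, hBTA, hB⟩ := Finset.exists_subset_card_eq (Nat.succ_le_of_lt hlt)
  exact hT ((hA B (hBTA.trans Finset.inter_subset_right) hB).mono
    (hBTA.trans Finset.inter_subset_left))

theorem maisOn_eq {S T : Finset ℕ} {n : ℕ}
    (hle : ∀ U ⊆ S, ¬ HasDirCycleIn E U → U.card ≤ n)
    (hTS : T ⊆ S) (hT : T.card = n) (hacyc : ¬ HasDirCycleIn E T) : maisOn E S = n :=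
  IsGreatest.csSup_eq ⟨⟨T, hTS, hT, hacyc⟩, fun _ ⟨U, hUS, hU, hUacyc⟩ => hU ▸ hle U hUS hUacyc⟩

end DirectedCycles

instance : DecidableRel Gedge := fun a b =>
  inferInstanceAs (Decidable (∃ i : Fin 3, a ∈ Wset i ∧ b ∈ Kset i))

/-- `K₁ ∪ K₂ ∪ K₃`, the vertices of `G*` with an incoming edge. -/
def gstarCore : Finset ℕ := {1, 2, 3, 5, 6, 7, 9, 10, 11}

set_option maxRecDepth 10000 in
theorem exists_short_cycle_of_mem_powersetCard_five :
    ∀ B ∈ gstarCore.powersetCard 5,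
      (∃ a ∈ B, ∃ b ∈ B, a ≠ b ∧ Gedge a b ∧ Gedge b a) ∨
      (∃ a ∈ B, ∃ b ∈ B, ∃ c ∈ B, a ≠ b ∧ b ≠ c ∧ a ≠ c ∧ Gedge a b ∧ Gedge b c ∧ Gedge c a) := by
  decide

theorem hasDirCycleIn_gstar_of_subset_core {B : Finset ℕ} (hB : B ⊆ gstarCore)
    (hcard : B.card = 5) : HasDirCycleIn Gedge B := by
  rcases exists_short_cycle_of_mem_powersetCard_five B (Finset.mem_powersetCard.2 ⟨hB, hcard⟩) with
    ⟨a, ha, b, hb, hab, h₁, h₂⟩ | ⟨a, ha, b, hb, c, hc, hab, hbc, hac, h₁, h₂, h₃⟩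
  · exact hasDirCycleIn_of_two_cycle ha hb hab h₁ h₂
  · exact hasDirCycleIn_of_three_cycle ha hb hc hab hbc hac h₁ h₂ h₃

theorem card_le_seven_of_not_hasDirCycleIn_gstar {T : Finset ℕ} (hT : T ⊆ Finset.Icc 1 12)
    (hacyc : ¬ HasDirCycleIn Gedge T) : T.card ≤ 7 := by
  have hcore : (T ∩ gstarCore).card ≤ 4 :=
    card_inter_le_of_not_hasDirCycleIn (fun _ => hasDirCycleIn_gstar_of_subset_core) hacyc
  have hrest : (T \ gstarCore).card ≤ 3 :=
    calc (T \ gstarCore).card ≤ (Finset.Icc 1 12 \ gstarCore).card :=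
          Finset.card_le_card (Finset.sdiff_subset_sdiff hT le_rfl)
      _ = 3 := by decide
  rw [← Finset.card_inter_add_card_sdiff T gstarCore]
  omega

theorem not_hasDirCycleIn_gstar_witness : ¬ HasDirCycleIn Gedge {2, 4, 8, 9, 10, 11, 12} :=
  not_hasDirCycleIn_of_potential
    (fun n => if n = 8 then 0 else if n ∈ ({9, 10, 11} : Finset ℕ) then 2 else 1) (by decide)

/-- `MAIS(G*) = 7`: the maximum cardinality of a subset `S` of `{1, …, 12}` whose induced
subgraph of `G*` contains no directed cycle equals `7`. -/
theorem mais_Gstar_eq_seven : maisOn Gedge (Finset.Icc 1 12) = 7 :=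
  maisOn_eq (fun _ => card_le_seven_of_not_hasDirCycleIn_gstar) (by decide) rfl
    not_hasDirCycleIn_gstar_witness
end

section
/- Let S ⊆ {1,…,12} be such that MAIS(G*_S) < α(G*_{S,u}). Then for every finite alphabet A with |A| ≥ 2, every positive integer m, and every valid index code of length ℓ with locality 1 for the three-receiver unicast problem B*_S, one has ℓ ≥ m·|S|. -/
/-- A valid index code of length `ℓ` with locality `1` and message length `m`, over the
alphabet `A`, for the three-receiver unicast problem `B*_S` determined by the message subset
`S ⊆ {1, …, 12}`.  The messages are `x j ∈ A ^ m` for `j ∈ S`.  It consists of an encoder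
`enc`, and for each receiver `i ∈ {1, 2, 3}` a set `R i` of at most `m * |Wᵢ ∩ S|` codeword
coordinates together with a decoder `dec i` which recovers the demanded messages
`(x j : j ∈ Wᵢ ∩ S)` from the observed codeword symbols `(enc x k : k ∈ R i)` and the side
information `(x j : j ∈ Kᵢ ∩ S)`. -/
structure ValidIndexCode (A : Type*) [Fintype A] (m ℓ : ℕ) (S : Finset ℕ) where
  enc : ({j : ℕ // j ∈ S} → Fin m → A) → Fin ℓ → A
  R : Fin 3 → Finset (Fin ℓ)
  locality : ∀ i : Fin 3, (R i).card ≤ m * (Wset i ∩ S).card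
  dec : ∀ i : Fin 3, ({k : Fin ℓ // k ∈ R i} → A) →
    ({j : ℕ // j ∈ Kset i ∩ S} → Fin m → A) → ({j : ℕ // j ∈ Wset i ∩ S} → Fin m → A)
  correct : ∀ (x : {j : ℕ // j ∈ S} → Fin m → A) (i : Fin 3)
      (j : {j : ℕ // j ∈ Wset i ∩ S}),
    dec i (fun k => enc x k.1) (fun j' => x ⟨j'.1, (Finset.mem_inter.mp j'.2).2⟩) j =
      x ⟨j.1, (Finset.mem_inter.mp j.2).2⟩

/-!
A receiver must read at least `m * |Wᵢ ∩ S|` symbols to tell its demands apart, so by locality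
it reads exactly that many and its decoder is a bijection for each value of the side
information. Hence the symbols read by receiver `i` depend only on the messages in `Wᵢ ∪ Kᵢ`.
If no message of `Wᵢ ∩ S` is side information of receiver `i'`, a symbol read by both `i` and
`i'` does not change when the demands of `i` vary, and `i` would recover its demands from one
symbol fewer: so `Rᵢ` and `Rᵢ'` are disjoint, and if this happens for every pair of receivers,
`ℓ ≥ ∑ |Rᵢ| = m * |S|`.

The hypothesis `MAIS < α` provides this. In a `G*ᵤ`-independent set every edge of a directed
cycle is one-way, and the only directed cycles made of one-way edges are the triangles
`2 → 10 → 7` and `3 → 6 → 11`. If both `Wᵢ ∩ Kᵢ' ∩ S` and `Wᵢ' ∩ Kᵢ ∩ S` were nonempty, `S`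
would contain, for each triangle, a vertex that can replace a vertex of the triangle in any
independent set containing it without creating a new cycle; this turns every
independent set into an acyclic set of the same size, so `α ≤ MAIS`.
-/

instance inst_s16 : DecidableRel Gedge := fun a b => by
  unfold Gedge; infer_instance

instance : DecidableRel Gu.Adj := fun a b => by
  change Decidable (a ≠ b ∧ Gedge a b ∧ Gedge b a); infer_instance

lemma Gedge.mem_Icc {a b : ℕ} (h : Gedge a b) :
    a ∈ Finset.Icc 1 12 ∧ b ∈ Finset.Icc 1 12 := by
  obtain ⟨i, ha, hb⟩ := h
  fin_cases i <;> simp only [Wset, Kset, Finset.mem_insert, Finset.mem_singleton,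
    Finset.mem_Icc] at ha hb ⊢ <;> omega

lemma Gedge.irrefl (a : ℕ) : ¬ Gedge a a := by
  rintro ⟨i, ha, hb⟩
  fin_cases i <;> simp only [Wset, Kset, Finset.mem_insert, Finset.mem_singleton] at ha hb <;>
    omega

lemma disjoint_Wset_Kset (i : Fin 3) : Disjoint (Wset i) (Kset i) := by
  fin_cases i <;> decide

lemma disjoint_Wset {i i' : Fin 3} (h : i ≠ i') : Disjoint (Wset i) (Wset i') := by
  fin_cases i <;> fin_cases i' <;> first | exact absurd rfl h | decide

lemma card_eq_sum_card_Wset_inter {S : Finset ℕ} (hS : S ⊆ Finset.Icc 1 12) :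
    S.card = ∑ i, (Wset i ∩ S).card := by
  have hcover : Finset.univ.biUnion Wset = Finset.Icc 1 12 := by decide
  rw [← Finset.card_biUnion (t := fun i => Wset i ∩ S) fun i _ i' _ h =>
    (disjoint_Wset h).mono inf_le_left inf_le_left, ← Finset.biUnion_inter, hcover,
    Finset.inter_eq_right.mpr hS]

section Cycles

open Finset

def triangles : Finset (Finset ℕ) := {{2, 7, 10}, {3, 6, 11}}

/-- One-way edges of `G*` never decrease `level`, and keep it constant only along the edges of
the two `triangles`. -/
def level (n : ℕ) : ℕ :=
  if n = 1 ∨ n = 5 ∨ n = 9 then 2 else if n = 4 ∨ n = 8 ∨ n = 12 then 0 else 1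

lemma level_le_of_oneWay : ∀ a ∈ Icc 1 12, ∀ b ∈ Icc 1 12,
    Gedge a b → ¬ Gedge b a → level a ≤ level b := by
  decide

lemma exists_triangle_of_oneWay_of_level_eq : ∀ a ∈ Icc 1 12, ∀ b ∈ Icc 1 12, ∀ c ∈ Icc 1 12,
    Gedge a b → ¬ Gedge b a → Gedge b c → ¬ Gedge c b → level a = level b →
    level b = level c → ∃ tri ∈ triangles, tri ⊆ {a, b, c} := by
  decide

lemma exists_adj_of_mem_triangles : ∀ tri ∈ triangles, ∀ tri' ∈ triangles, tri ≠ tri' →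
    ∃ a ∈ tri, ∃ b ∈ tri', Gu.Adj a b := by
  decide

variable {T : Finset ℕ}

lemma not_gedge_of_gedge_of_indep (hind : ∀ a ∈ T, ∀ b ∈ T, ¬ Gu.Adj a b) {a b : ℕ}
    (ha : a ∈ T) (hb : b ∈ T) (hab : Gedge a b) : ¬ Gedge b a := fun hba =>
  hind a ha b hb ⟨fun h => Gedge.irrefl a (h ▸ hab), hab, hba⟩

lemma exists_triangle_subset_of_hasDirCycleIn (hind : ∀ a ∈ T, ∀ b ∈ T, ¬ Gu.Adj a b)
    (hcyc : HasDirCycleIn Gedge T) : ∃ tri ∈ triangles, tri ⊆ T := by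
  obtain ⟨k, v, -, hmem, hedge⟩ := hcyc
  have oneWay i : ¬ Gedge (v (i + 1)) (v i) :=
    not_gedge_of_gedge_of_indep hind (hmem i) (hmem (i + 1)) (hedge i)
  have mono i : level (v i) ≤ level (v (i + 1)) :=
    level_le_of_oneWay _ (hedge i).mem_Icc.1 _ (hedge i).mem_Icc.2 (hedge i) (oneWay i)
  -- at a vertex of maximal level the next two edges keep the level, so they are triangle edges
  obtain ⟨i, -, hmax⟩ := exists_max_image univ (fun i => level (v i)) univ_nonempty
  have h₁ : level (v i) = level (v (i + 1)) := le_antisymm (mono i) (hmax _ (mem_univ _))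
  have h₂ : level (v (i + 1)) = level (v (i + 1 + 1)) :=
    le_antisymm (mono _) (h₁ ▸ hmax _ (mem_univ _))
  obtain ⟨tri, htri, hsub⟩ := exists_triangle_of_oneWay_of_level_eq _ (hedge i).mem_Icc.1
    _ (hedge i).mem_Icc.2 _ (hedge (i + 1)).mem_Icc.2 (hedge i) (oneWay i) (hedge (i + 1))
    (oneWay (i + 1)) h₁ h₂
  exact ⟨tri, htri, hsub.trans (by simp only [insert_subset_iff, singleton_subset_iff, hmem,
    and_self])⟩

lemma eq_of_mem_triangles_of_subset (hind : ∀ a ∈ T, ∀ b ∈ T, ¬ Gu.Adj a b)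
    {tri tri' : Finset ℕ} (htri : tri ∈ triangles) (htri' : tri' ∈ triangles)
    (hsub : tri ⊆ T) (hsub' : tri' ⊆ T) : tri = tri' := by
  by_contra hne
  obtain ⟨a, ha, b, hb, hab⟩ := exists_adj_of_mem_triangles tri htri tri' htri' hne
  exact hind a (hsub ha) b (hsub' hb) hab

lemma not_hasDirCycleIn_insert {z : ℕ} (hz : ∀ u ∈ T, ¬ Gedge z u)
    (hT : ¬ HasDirCycleIn Gedge T) : ¬ HasDirCycleIn Gedge (insert z T) := by
  rintro ⟨k, v, hinj, hmem, hedge⟩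
  by_cases hzv : ∃ i, v i = z
  · obtain ⟨i, rfl⟩ := hzv
    rcases mem_insert.mp (hmem (i + 1)) with h | h
    · exact Gedge.irrefl _ (h ▸ hedge i)
    · exact hz _ h (hedge i)
  · simp only [not_exists] at hzv
    exact hT ⟨k, v, hinj, fun i => (mem_insert.mp (hmem i)).resolve_left (hzv i), hedge⟩

/-- In an independent set containing the triangle `tri`, the vertex `z` can replace the vertex
`c` of `tri`: `z` is outside the set, and `c` is its only out-neighbour there. -/
def Swappable (tri : Finset ℕ) (z : ℕ) : Prop :=
  (∃ t ∈ tri, Gu.Adj z t) ∧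
    ∃ c ∈ tri, ∀ u ∈ Icc 1 12, Gedge z u → u = c ∨ ∃ t ∈ tri, Gu.Adj u t

instance (tri : Finset ℕ) : DecidablePred (Swappable tri) := fun z => by
  unfold Swappable; infer_instance

lemma exists_acyclic_of_swappable {S : Finset ℕ} (hTS : T ⊆ S)
    (hind : ∀ a ∈ T, ∀ b ∈ T, ¬ Gu.Adj a b) {tri : Finset ℕ} (htri : tri ∈ triangles)
    (hsub : tri ⊆ T) {z : ℕ} (hzS : z ∈ S) (hz : Swappable tri z) :
    ∃ T' ⊆ S, T'.card = T.card ∧ ¬ HasDirCycleIn Gedge T' := by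
  obtain ⟨⟨t, ht, hzt⟩, c, hc, hout⟩ := hz
  have hzT : z ∉ T := fun hzT => hind z hzT t (hsub ht) hzt
  refine ⟨insert z (T.erase c), insert_subset hzS ((erase_subset c T).trans hTS), ?_, ?_⟩
  · rw [card_insert_of_notMem fun h => hzT (mem_of_mem_erase h), card_erase_add_one (hsub hc)]
  have hind' : ∀ a ∈ T.erase c, ∀ b ∈ T.erase c, ¬ Gu.Adj a b := fun a ha b hb =>
    hind a (mem_of_mem_erase ha) b (mem_of_mem_erase hb)
  refine not_hasDirCycleIn_insert (fun u hu hzu => ?_) fun hcyc => ?_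
  · rcases hout u hzu.mem_Icc.2 hzu with rfl | ⟨t', ht', hut'⟩
    · exact notMem_erase u T hu
    · exact hind u (mem_of_mem_erase hu) t' (hsub ht') hut'
  · obtain ⟨tri', htri', hsub'⟩ := exists_triangle_subset_of_hasDirCycleIn hind' hcyc
    obtain rfl := eq_of_mem_triangles_of_subset hind htri' htri
      (hsub'.trans (erase_subset c T)) hsub
    exact notMem_erase c T (hsub' hc)

lemma alphaOn_le_maisOn {S : Finset ℕ} (hsw : ∀ tri ∈ triangles, ∃ z ∈ S, Swappable tri z) :
    alphaOn Gu S ≤ maisOn Gedge S := by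
  refine csSup_le ⟨0, ∅, empty_subset S, card_empty, fun a ha => absurd ha (notMem_empty a)⟩ ?_
  rintro n ⟨T, hTS, rfl, hind⟩
  refine le_csSup ⟨S.card, ?_⟩ ?_
  · rintro _ ⟨T', hT'S, rfl, -⟩
    exact card_le_card hT'S
  by_cases hcyc : HasDirCycleIn Gedge T
  · obtain ⟨tri, htri, hsub⟩ := exists_triangle_subset_of_hasDirCycleIn hind hcyc
    obtain ⟨z, hzS, hz⟩ := hsw tri htri
    exact exists_acyclic_of_swappable hTS hind htri hsub hzS hz
  · exact ⟨T, hTS, rfl, hcyc⟩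

lemma swappable_of_mem_Wset_inter_Kset : ∀ i i' : Fin 3, i ≠ i' →
    ∀ z ∈ Wset i ∩ Kset i', ∀ z' ∈ Wset i' ∩ Kset i, ∀ tri ∈ triangles,
      Swappable tri z ∨ Swappable tri z' := by
  decide

lemma disjoint_or_disjoint_of_maisOn_lt_alphaOn {S : Finset ℕ}
    (h : maisOn Gedge S < alphaOn Gu S) {i i' : Fin 3} (hii' : i ≠ i') :
    Disjoint (Wset i ∩ Kset i') S ∨ Disjoint (Wset i' ∩ Kset i) S := by
  by_contra! hboth
  obtain ⟨z, hz, hzS⟩ := not_disjoint_iff.mp hboth.1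
  obtain ⟨z', hz', hz'S⟩ := not_disjoint_iff.mp hboth.2
  refine (alphaOn_le_maisOn fun tri htri => ?_).not_gt h
  rcases swappable_of_mem_Wset_inter_Kset i i' hii' z hz z' hz' tri htri with hsw | hsw
  exacts [⟨z, hzS, hsw⟩, ⟨z', hz'S, hsw⟩]

end Cycles

section Messages

variable {A : Type*} {m : ℕ} {S : Finset ℕ}

def restrictMsg (B : Finset ℕ) (x : {j : ℕ // j ∈ S} → Fin m → A) :
    {j : ℕ // j ∈ B ∩ S} → Fin m → A :=
  fun j => x ⟨j.1, (Finset.mem_inter.mp j.2).2⟩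

def overrideMsg (B : Finset ℕ) (w : {j : ℕ // j ∈ B ∩ S} → Fin m → A)
    (x : {j : ℕ // j ∈ S} → Fin m → A) : {j : ℕ // j ∈ S} → Fin m → A :=
  fun j => if h : j.1 ∈ B then w ⟨j.1, Finset.mem_inter.mpr ⟨h, j.2⟩⟩ else x j

lemma overrideMsg_of_notMem {B : Finset ℕ} (w : {j : ℕ // j ∈ B ∩ S} → Fin m → A)
    (x : {j : ℕ // j ∈ S} → Fin m → A) {j : {j : ℕ // j ∈ S}} (hj : j.1 ∉ B) :
    overrideMsg B w x j = x j :=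
  dif_neg hj

lemma restrictMsg_overrideMsg (B : Finset ℕ) (w : {j : ℕ // j ∈ B ∩ S} → Fin m → A)
    (x : {j : ℕ // j ∈ S} → Fin m → A) : restrictMsg B (overrideMsg B w x) = w :=
  funext fun j => dif_pos (Finset.mem_inter.mp j.2).1

lemma restrictMsg_overrideMsg_of_disjoint {B C : Finset ℕ} (hBC : Disjoint B C)
    (w : {j : ℕ // j ∈ B ∩ S} → Fin m → A) (x : {j : ℕ // j ∈ S} → Fin m → A) :
    restrictMsg C (overrideMsg B w x) = restrictMsg C x :=
  funext fun j => dif_neg (Finset.disjoint_right.mp hBC (Finset.mem_inter.mp j.2).1)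

end Messages

lemma card_le_pow_pred_of_injective {α ι β : Type*} [Fintype α] [Fintype β] [DecidableEq ι]
    {R : Finset ι} {k : ι} (hk : k ∈ R) {f : α → {x // x ∈ R} → β} (hf : f.Injective)
    (hconst : ∀ a b, f a ⟨k, hk⟩ = f b ⟨k, hk⟩) :
    Fintype.card α ≤ Fintype.card β ^ (R.card - 1) := by
  have hinj : Function.Injective
      fun a (x : {x // x ∈ R.erase k}) => f a ⟨x.1, Finset.mem_of_mem_erase x.2⟩ := by
    refine fun a b hab => hf (funext fun x => ?_)
    by_cases hx : x.1 = k
    · obtain rfl : x = ⟨k, hk⟩ := Subtype.ext hx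
      exact hconst a b
    · exact congrFun hab ⟨x.1, Finset.mem_erase.mpr ⟨hx, x.2⟩⟩
  simpa [Finset.card_erase_of_mem hk] using Fintype.card_le_of_injective _ hinj

namespace ValidIndexCode

variable {A : Type*} [Fintype A] {m ℓ : ℕ} {S : Finset ℕ} (code : ValidIndexCode A m ℓ S)

def observe (i : Fin 3) (x : {j : ℕ // j ∈ S} → Fin m → A) : {k : Fin ℓ // k ∈ code.R i} → A :=
  fun k => code.enc x k.1

lemma dec_observe (i : Fin 3) (x : {j : ℕ // j ∈ S} → Fin m → A) :
    code.dec i (code.observe i x) (restrictMsg (Kset i) x) = restrictMsg (Wset i) x :=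
  funext (code.correct x i)

lemma card_observations (i : Fin 3) :
    Fintype.card ({k : Fin ℓ // k ∈ code.R i} → A) = Fintype.card A ^ (code.R i).card := by
  simp

lemma card_demands (i : Fin 3) :
    Fintype.card ({j : ℕ // j ∈ Wset i ∩ S} → Fin m → A) =
      Fintype.card A ^ (m * (Wset i ∩ S).card) := by
  simp [← pow_mul]

lemma dec_surjective [Nonempty A] (i : Fin 3) (s : {j : ℕ // j ∈ Kset i ∩ S} → Fin m → A) :
    Function.Surjective fun g => code.dec i g s := by
  intro w
  let x := overrideMsg (Wset i) w (overrideMsg (Kset i) s fun _ _ => Classical.ofNonempty)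
  refine ⟨code.observe i x, ?_⟩
  have hside : restrictMsg (Kset i) x = s := by
    rw [restrictMsg_overrideMsg_of_disjoint (disjoint_Wset_Kset i), restrictMsg_overrideMsg]
  have hdec := code.dec_observe i x
  rwa [hside, restrictMsg_overrideMsg] at hdec

lemma dec_bijective [Nonempty A] (i : Fin 3) (s : {j : ℕ // j ∈ Kset i ∩ S} → Fin m → A) :
    Function.Bijective fun g => code.dec i g s := by
  refine (Fintype.bijective_iff_surjective_and_card _).mpr ⟨code.dec_surjective i s, ?_⟩
  refine le_antisymm ?_ (Fintype.card_le_of_surjective _ (code.dec_surjective i s))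
  rw [card_observations, card_demands]
  exact Nat.pow_le_pow_right Fintype.card_pos (code.locality i)

lemma card_R (hA : 1 < Fintype.card A) (i : Fin 3) :
    (code.R i).card = m * (Wset i ∩ S).card := by
  have : Nonempty A := Fintype.card_pos_iff.mp (by omega)
  have hcard := Fintype.card_congr (Equiv.ofBijective _ (code.dec_bijective i fun _ _ =>
    Classical.ofNonempty))
  rwa [card_observations, card_demands, Nat.pow_right_inj hA] at hcard

lemma observe_eq_of_eqOn [Nonempty A] (i : Fin 3) {x x' : {j : ℕ // j ∈ S} → Fin m → A}
    (hxx : ∀ j : {j : ℕ // j ∈ S}, j.1 ∈ Wset i ∨ j.1 ∈ Kset i → x j = x' j) :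
    code.observe i x = code.observe i x' := by
  have hside : restrictMsg (Kset i) x = restrictMsg (Kset i) x' :=
    funext fun j => hxx _ (.inr (Finset.mem_inter.mp j.2).1)
  have hdemand : restrictMsg (Wset i) x = restrictMsg (Wset i) x' :=
    funext fun j => hxx _ (.inl (Finset.mem_inter.mp j.2).1)
  refine (code.dec_bijective i (restrictMsg (Kset i) x')).injective ?_
  calc code.dec i (code.observe i x) (restrictMsg (Kset i) x')
      = restrictMsg (Wset i) x := by rw [← hside, dec_observe]
    _ = restrictMsg (Wset i) x' := hdemand
    _ = code.dec i (code.observe i x') (restrictMsg (Kset i) x') := (code.dec_observe i x').symm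

lemma disjoint_R (hA : 1 < Fintype.card A) {i i' : Fin 3} (hii' : i ≠ i')
    (hWK : Disjoint (Wset i ∩ Kset i') S) : Disjoint (code.R i) (code.R i') := by
  have : Nonempty A := Fintype.card_pos_iff.mp (by omega)
  refine Finset.disjoint_left.mpr fun k hk hk' => ?_
  obtain ⟨x₀⟩ : Nonempty ({j : ℕ // j ∈ S} → Fin m → A) := inferInstance
  let F := fun w => overrideMsg (Wset i) w x₀
  have hinj : Function.Injective fun w => code.observe i (F w) := by
    intro w w' h
    have hw := code.dec_observe i (F w)
    have hw' := code.dec_observe i (F w')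
    simp only [F, restrictMsg_overrideMsg_of_disjoint (disjoint_Wset_Kset i),
      restrictMsg_overrideMsg] at hw hw'
    rw [← hw, ← hw']
    exact congrArg (code.dec i · _) h
  -- the symbol `k` is also read by `i'`, who does not see the demands of `i`
  have hconst w w' : code.observe i (F w) ⟨k, hk⟩ = code.observe i (F w') ⟨k, hk⟩ := by
    refine congrFun (code.observe_eq_of_eqOn i' fun j hj => ?_) ⟨k, hk'⟩
    have hjW : j.1 ∉ Wset i := fun hjW => hj.elim
      (Finset.disjoint_left.mp (disjoint_Wset hii') hjW)
      fun hjK => Finset.disjoint_left.mp hWK (Finset.mem_inter.mpr ⟨hjW, hjK⟩) j.2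
    exact (overrideMsg_of_notMem w x₀ hjW).trans (overrideMsg_of_notMem w' x₀ hjW).symm
  have hle := card_le_pow_pred_of_injective hk hinj hconst
  have hpos : 0 < (code.R i).card := Finset.card_pos.mpr ⟨k, hk⟩
  rw [card_demands, ← code.card_R hA] at hle
  exact absurd hle (not_le.mpr (Nat.pow_lt_pow_right hA (by omega)))

end ValidIndexCode

theorem length_lower_bound_of_mais_lt_alpha_general (S : Finset ℕ) (hS : S ⊆ Finset.Icc 1 12)
    (h : maisOn Gedge S < alphaOn Gu S)
    (A : Type*) [Fintype A] (hA : 2 ≤ Fintype.card A)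
    (m : ℕ) (ℓ : ℕ) (code : ValidIndexCode A m ℓ S) :
    m * S.card ≤ ℓ := by
  have hdisj : ((Finset.univ : Finset (Fin 3)) : Set (Fin 3)).PairwiseDisjoint code.R := by
    intro i _ i' _ hii'
    rcases disjoint_or_disjoint_of_maisOn_lt_alphaOn h hii' with hWK | hWK
    exacts [code.disjoint_R hA hii' hWK, (code.disjoint_R hA hii'.symm hWK).symm]
  calc m * S.card = ∑ i, m * (Wset i ∩ S).card := by
        rw [← Finset.mul_sum, ← card_eq_sum_card_Wset_inter hS]
    _ = ∑ i, (code.R i).card := by simp only [code.card_R hA]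
    _ = (Finset.univ.biUnion code.R).card := (Finset.card_biUnion hdisj).symm
    _ ≤ ℓ := by simpa using Finset.card_le_univ (Finset.univ.biUnion code.R)

/-- If `MAIS(G*_S) < α(G*_{S,u})`, then every valid index code of length `ℓ` with locality `1`
for `B*_S` over an alphabet of size at least `2` satisfies `ℓ ≥ m * |S|`. -/
theorem length_lower_bound_of_mais_lt_alpha (S : Finset ℕ) (hS : S ⊆ Finset.Icc 1 12)
    (h : maisOn Gedge S < alphaOn Gu S)
    (A : Type*) [Fintype A] (hA : 2 ≤ Fintype.card A)
    (m : ℕ) (hm : 0 < m) (ℓ : ℕ) (code : ValidIndexCode A m ℓ S) :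
    m * S.card ≤ ℓ :=
  length_lower_bound_of_mais_lt_alpha_general S hS h A hA m ℓ code
end
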